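/- arXiv:2108.09842 — 2 statements merged into one kernel-verified Lean document; each statement's English description precedes it below -/
import Mathlib

section
/- Let f : ℝ² → ℝ be a homogeneous polynomial of degree n ≥ 2 and let A be an angle such that the gradient of f at (cos A, sin A) is nonzero. Define, for (x,y) ∈ ℝ², W = √(1+f_x²+f_y²), d = 1 − √((W−1)/(W+1)), and Δ² = [((1+f_y²)·f_xx − 2·f_x·f_y·f_xy + (1+f_x²)·f_yy)² − 4·(1+f_x²+f_y²)·(f_xx·f_yy − f_xy²)] / (1+f_x²+f_y²)³, the square of the difference of principal curvatures of the graph z = f(x,y). Then Δ²/d², evaluated at (R·cos A, R·sin A), tends to 0 as R → ∞ if and only if Q(f)(cos A, sin A) = 0, where Q(f) = f_xx·f_y² − 2·f_xy·f_x·f_y + f_yy·f_x². That is, the graph has an umbilic point at infinity at A precisely when the tangent direction to the level set of f at infinity is an asymptotic direction. -/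
open MvPolynomial Real Filter

/-- Evaluate a bivariate polynomial at `(x, y)`. -/
noncomputable def ev (p : MvPolynomial (Fin 2) ℝ) (x y : ℝ) : ℝ :=
  eval ![x, y] p

/-- Formal partial derivative in the first variable. -/
noncomputable def Dx (p : MvPolynomial (Fin 2) ℝ) : MvPolynomial (Fin 2) ℝ :=
  pderiv (0 : Fin 2) p

/-- Formal partial derivative in the second variable. -/
noncomputable def Dy (p : MvPolynomial (Fin 2) ℝ) : MvPolynomial (Fin 2) ℝ :=
  pderiv (1 : Fin 2) p

/-- The square `(κ₁ − κ₂)²` of the difference of the principal curvatures of the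
graph `z = f(x,y)` at `(x,y)`, for `f` the polynomial function determined by `p`. -/
noncomputable def Delta2 (p : MvPolynomial (Fin 2) ℝ) (x y : ℝ) : ℝ :=
  (((1 + ev (Dy p) x y ^ 2) * ev (Dx (Dx p)) x y
      - 2 * ev (Dx p) x y * ev (Dy p) x y * ev (Dy (Dx p)) x y
      + (1 + ev (Dx p) x y ^ 2) * ev (Dy (Dy p)) x y) ^ 2
    - 4 * (1 + ev (Dx p) x y ^ 2 + ev (Dy p) x y ^ 2)
        * (ev (Dx (Dx p)) x y * ev (Dy (Dy p)) x y - ev (Dy (Dx p)) x y ^ 2))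
  / (1 + ev (Dx p) x y ^ 2 + ev (Dy p) x y ^ 2) ^ 3

/-- `W = √(1 + f_x² + f_y²)`. -/
noncomputable def Wgr (p : MvPolynomial (Fin 2) ℝ) (x y : ℝ) : ℝ :=
  Real.sqrt (1 + ev (Dx p) x y ^ 2 + ev (Dy p) x y ^ 2)

/-- The distance to infinity `d = 1 − √((W−1)/(W+1)) = 1 − |ξ|` of the point `(x,y)`
under the Gauss map of the graph `z = f(x,y)`. -/
noncomputable def dInf (p : MvPolynomial (Fin 2) ℝ) (x y : ℝ) : ℝ :=
  1 - Real.sqrt ((Wgr p x y - 1) / (Wgr p x y + 1))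

/-- `Q(f) = f_xx·f_y² − 2·f_xy·f_x·f_y + f_yy·f_x²`. -/
noncomputable def Qf (p : MvPolynomial (Fin 2) ℝ) : MvPolynomial (Fin 2) ℝ :=
  Dx (Dx p) * (Dy p) ^ 2 - 2 * Dy (Dx p) * Dx p * Dy p + Dy (Dy p) * (Dx p) ^ 2

/-!
Along the ray `R ↦ R • (cos A, sin A)`, homogeneity of degree `n = k + 2` makes the first
derivatives grow like `R^(k+1)`, the second derivatives like `R^k` and `Q(f)` like `R^(3k+2)`.
Since `d ~ 1/W`, the quotient `Δ²/d²` behaves like `Δ² W²`, and writing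
`Δ² = ((Δf + Q(f))² - 4 W² det Hess f) / W⁶` every term of `Δ² W²` decays except
`(Q(f)/|∇f|²)² R^(2k)`, which does not tend to `0` unless `Q(f)(cos A, sin A) = 0`.
-/

open Topology

theorem MvPolynomial.IsHomogeneous.eval_smul {σ R : Type*} [CommSemiring R]
    {φ : MvPolynomial σ R} {n : ℕ} (hφ : φ.IsHomogeneous n) (r : R) (x : σ → R) :
    eval (r • x) φ = r ^ n * eval x φ := by
  rw [eval_eq, eval_eq, Finset.mul_sum]
  refine Finset.sum_congr rfl fun d hd => ?_
  have hdeg : ∑ i ∈ d.support, d i = n := by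
    rw [← Finsupp.degree_apply, Finsupp.degree_eq_weight_one]
    exact hφ (mem_support_iff.mp hd)
  simp only [Pi.smul_apply, smul_eq_mul, mul_pow, Finset.prod_mul_distrib,
    Finset.prod_pow_eq_pow_sum, hdeg]
  ring

theorem MvPolynomial.IsHomogeneous.ev_mul_mul {p : MvPolynomial (Fin 2) ℝ} {n : ℕ}
    (hp : p.IsHomogeneous n) (R x y : ℝ) : ev p (R * x) (R * y) = R ^ n * ev p x y := by
  rw [ev, ev, ← hp.eval_smul]
  congr
  ext i
  fin_cases i <;> simp

noncomputable def gradNormSq (p : MvPolynomial (Fin 2) ℝ) : MvPolynomial (Fin 2) ℝ :=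
  Dx p ^ 2 + Dy p ^ 2

noncomputable def laplacian (p : MvPolynomial (Fin 2) ℝ) : MvPolynomial (Fin 2) ℝ :=
  Dx (Dx p) + Dy (Dy p)

noncomputable def hessianDet (p : MvPolynomial (Fin 2) ℝ) : MvPolynomial (Fin 2) ℝ :=
  Dx (Dx p) * Dy (Dy p) - Dy (Dx p) ^ 2

theorem Delta2_eq (p : MvPolynomial (Fin 2) ℝ) (x y : ℝ) :
    Delta2 p x y =
      ((ev (laplacian p) x y + ev (Qf p) x y) ^ 2
          - 4 * (1 + ev (gradNormSq p) x y) * ev (hessianDet p) x y)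
        / (1 + ev (gradNormSq p) x y) ^ 3 := by
  simp only [Delta2, ev, laplacian, Qf, gradNormSq, hessianDet, map_add, map_sub, map_mul,
    map_pow, map_ofNat]
  ring

theorem Wgr_eq (p : MvPolynomial (Fin 2) ℝ) (x y : ℝ) :
    Wgr p x y = √(1 + ev (gradNormSq p) x y) := by
  simp only [Wgr, ev, gradNormSq, map_add, map_pow, add_assoc]

theorem ev_gradNormSq_nonneg (p : MvPolynomial (Fin 2) ℝ) (x y : ℝ) :
    0 ≤ ev (gradNormSq p) x y := by
  simp only [gradNormSq, ev, map_add, map_pow]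
  positivity

theorem ev_gradNormSq_pos {p : MvPolynomial (Fin 2) ℝ} {x y : ℝ}
    (h : (ev (Dx p) x y, ev (Dy p) x y) ≠ (0, 0)) : 0 < ev (gradNormSq p) x y := by
  have : ev (Dx p) x y ≠ 0 ∨ ev (Dy p) x y ≠ 0 := by
    contrapose! h; rw [h.1, h.2]
  simp only [gradNormSq, ev, map_add, map_pow] at this ⊢
  rcases this with h | h <;> positivity

section Homogeneous

variable {p : MvPolynomial (Fin 2) ℝ} {k : ℕ}

theorem isHomogeneous_Dx (hp : p.IsHomogeneous (k + 1)) : (Dx p).IsHomogeneous k := hp.pderiv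

theorem isHomogeneous_Dy (hp : p.IsHomogeneous (k + 1)) : (Dy p).IsHomogeneous k := hp.pderiv

theorem isHomogeneous_gradNormSq (hp : p.IsHomogeneous (k + 2)) :
    (gradNormSq p).IsHomogeneous (2 * k + 2) := by
  have h := ((isHomogeneous_Dx hp).pow 2).add ((isHomogeneous_Dy hp).pow 2)
  rwa [show (k + 1) * 2 = 2 * k + 2 by ring] at h

theorem isHomogeneous_laplacian (hp : p.IsHomogeneous (k + 2)) :
    (laplacian p).IsHomogeneous k :=
  (isHomogeneous_Dx (isHomogeneous_Dx hp)).add (isHomogeneous_Dy (isHomogeneous_Dy hp))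

theorem isHomogeneous_hessianDet (hp : p.IsHomogeneous (k + 2)) :
    (hessianDet p).IsHomogeneous (2 * k) := by
  have hxx := isHomogeneous_Dx (isHomogeneous_Dx hp)
  have hxy := isHomogeneous_Dy (isHomogeneous_Dx hp)
  have hyy := isHomogeneous_Dy (isHomogeneous_Dy hp)
  rw [hessianDet, two_mul, sq]
  exact (hxx.mul hyy).sub (hxy.mul hxy)

theorem isHomogeneous_Qf (hp : p.IsHomogeneous (k + 2)) : (Qf p).IsHomogeneous (3 * k + 2) := by
  have hx := isHomogeneous_Dx hp
  have hy := isHomogeneous_Dy hp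
  have hxx := isHomogeneous_Dx hx
  have hxy := isHomogeneous_Dy hx
  have hyy := isHomogeneous_Dy hy
  have t₁ : (Dx (Dx p) * Dy p ^ 2).IsHomogeneous (3 * k + 2) := by
    convert hxx.mul (hy.pow 2) using 1; ring
  have t₂ : (2 * Dy (Dx p) * Dx p * Dy p).IsHomogeneous (3 * k + 2) := by
    rw [← map_ofNat C 2]
    convert (((isHomogeneous_C _ _).mul hxy).mul hx).mul hy using 1; ring
  have t₃ : (Dy (Dy p) * Dx p ^ 2).IsHomogeneous (3 * k + 2) := by
    convert hyy.mul (hx.pow 2) using 1; ring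
  exact (t₁.sub t₂).add t₃

end Homogeneous

theorem tendsto_mul_one_sub_sqrt_div_atTop :
    Tendsto (fun W : ℝ => W * (1 - √((W - 1) / (W + 1)))) atTop (𝓝 1) := by
  have he : Tendsto (fun W : ℝ => 2 / (W + 1)) atTop (𝓝 0) :=
    tendsto_const_nhds.div_atTop (tendsto_atTop_add_const_right _ 1 tendsto_id)
  have hlim : Tendsto (fun W : ℝ => (2 - 2 / (W + 1)) / (1 + √(1 - 2 / (W + 1)))) atTop
      (𝓝 1) := by
    have h₂ : Tendsto (fun W : ℝ => 2 - 2 / (W + 1)) atTop (𝓝 2) := by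
      simpa using (tendsto_const_nhds (x := (2 : ℝ))).sub he
    have h₁ : Tendsto (fun W : ℝ => 1 - 2 / (W + 1)) atTop (𝓝 1) := by
      simpa using (tendsto_const_nhds (x := (1 : ℝ))).sub he
    have := h₂.div ((tendsto_const_nhds (x := (1 : ℝ))).add h₁.sqrt) (by norm_num)
    norm_num at this
    exact this
  refine hlim.congr' ?_
  filter_upwards [eventually_ge_atTop 1] with W hW
  -- `1 - t = (1 - t²) / (1 + t)` with `1 - t² = 2 / (W + 1)`
  have hsq : (W - 1) / (W + 1) = 1 - 2 / (W + 1) := by field_simp; ring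
  have ht : √(1 - 2 / (W + 1)) ^ 2 = 1 - 2 / (W + 1) :=
    Real.sq_sqrt (by rw [← hsq]; exact div_nonneg (by linarith) (by linarith))
  have hW2 : W * (2 / (W + 1)) = 2 - 2 / (W + 1) := by field_simp; ring
  rw [hsq, div_eq_iff (by positivity)]
  linear_combination W * ht - hW2

theorem tendsto_div_nhds_zero_iff_of_tendsto {α : Type*} {l : Filter α} {f g : α → ℝ} {c : ℝ}
    (hg : Tendsto g l (𝓝 c)) (hc : c ≠ 0) :
    Tendsto (fun x => f x / g x) l (𝓝 0) ↔ Tendsto f l (𝓝 0) := by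
  refine ⟨fun h => ?_, fun h => zero_div c ▸ h.div hg hc⟩
  have hfg := h.mul hg
  rw [zero_mul] at hfg
  refine hfg.congr' ?_
  filter_upwards [hg.eventually_ne hc] with x hx
  exact div_mul_cancel₀ _ hx

theorem tendsto_sq_nhds_zero_iff {α : Type*} {l : Filter α} {f : α → ℝ} :
    Tendsto (fun x => f x ^ 2) l (𝓝 0) ↔ Tendsto f l (𝓝 0) := by
  refine ⟨fun h => ?_, fun h => by simpa using h.pow 2⟩
  rw [tendsto_zero_iff_abs_tendsto_zero]
  simpa [Real.sqrt_sq_eq_abs, Function.comp_def] using h.sqrt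

theorem eq_zero_of_tendsto_const_mul_nhds_zero {α : Type*} {l : Filter α} [l.NeBot]
    {f : α → ℝ} {c q : ℝ} (hc : 0 < c) (hf : ∀ᶠ x in l, c ≤ f x)
    (h : Tendsto (fun x => q * f x) l (𝓝 0)) : q = 0 := by
  have hle : |q| * c ≤ 0 := by
    have habs : Tendsto (fun x => |q * f x|) l (𝓝 0) := by simpa using h.abs
    refine ge_of_tendsto habs ?_
    filter_upwards [hf] with x hx
    rw [abs_mul]
    exact mul_le_mul_of_nonneg_left (hx.trans (le_abs_self _)) (abs_nonneg q)
  exact abs_nonpos_iff.mp (nonpos_of_mul_nonpos_left hle hc)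

section PowerRatios

variable {m : ℝ} {j d : ℕ}

theorem tendsto_pow_div_one_add_mul_pow (hm : 0 < m) (hjd : j < d) :
    Tendsto (fun R : ℝ => R ^ j / (1 + m * R ^ d)) atTop (𝓝 0) := by
  have hbound : Tendsto (fun R : ℝ => m⁻¹ * R⁻¹) atTop (𝓝 0) := by
    simpa using tendsto_inv_atTop_zero.const_mul m⁻¹
  refine squeeze_zero' ?_ ?_ hbound
  · filter_upwards [eventually_ge_atTop 0] with R hR
    positivity
  · filter_upwards [eventually_ge_atTop 1] with R hR
    have hRd : R ^ (j + 1) ≤ R ^ d := pow_le_pow_right₀ hR hjd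
    rw [div_le_iff₀ (by positivity)]
    field_simp
    rw [pow_succ] at hRd
    nlinarith [pow_nonneg (zero_le_one.trans hR) d]

theorem inv_one_add_le_pow_div_one_add_mul_pow (hm : 0 ≤ m) (hdj : d ≤ j) {R : ℝ}
    (hR : 1 ≤ R) : (1 + m)⁻¹ ≤ R ^ j / (1 + m * R ^ d) := by
  have hRj : 1 ≤ R ^ j := one_le_pow₀ hR
  have hRd : R ^ d ≤ R ^ j := pow_le_pow_right₀ hR hdj
  rw [inv_eq_one_div, div_le_div_iff₀ (by positivity) (by positivity)]
  nlinarith [mul_le_mul_of_nonneg_left hRd hm]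

end PowerRatios

/-- By homogeneity this is `Δ² W²` along the ray through a direction where `Δf`, `Q(f)`,
`det Hess f` and `|∇f|²` take the values `ℓ`, `q`, `h` and `m`. -/
theorem tendsto_rayProfile_iff {m : ℝ} (hm : 0 < m) (ℓ q h : ℝ) (k : ℕ) :
    Tendsto (fun R : ℝ =>
        ((ℓ * R ^ k + q * R ^ (3 * k + 2)) ^ 2 - 4 * (1 + m * R ^ (2 * k + 2)) * (h * R ^ (2 * k)))
          / (1 + m * R ^ (2 * k + 2)) ^ 2) atTop (𝓝 0) ↔ q = 0 := by
  set G : ℝ → ℝ := fun R => 1 + m * R ^ (2 * k + 2)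
  set E : ℝ → ℝ := fun R => ℓ * (R ^ k / G R) + q * (R ^ (3 * k + 2) / G R)
  have hA : Tendsto (fun R => R ^ k / G R) atTop (𝓝 0) :=
    tendsto_pow_div_one_add_mul_pow hm (by omega)
  have hB : Tendsto (fun R => R ^ (2 * k) / G R) atTop (𝓝 0) :=
    tendsto_pow_div_one_add_mul_pow hm (by omega)
  have hlow : ∀ᶠ R : ℝ in atTop, (1 + m)⁻¹ ≤ R ^ (3 * k + 2) / G R :=
    eventually_atTop.2 ⟨1, fun R hR =>
      inv_one_add_le_pow_div_one_add_mul_pow hm.le (show 2 * k + 2 ≤ 3 * k + 2 by omega) hR⟩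
  have hsplit : ∀ᶠ R : ℝ in atTop,
      E R ^ 2 - 4 * h * (R ^ (2 * k) / G R) =
        ((ℓ * R ^ k + q * R ^ (3 * k + 2)) ^ 2 - 4 * G R * (h * R ^ (2 * k))) / G R ^ 2 := by
    filter_upwards [eventually_ge_atTop 0] with R hR
    have : G R ≠ 0 := by positivity
    simp only [E]
    field_simp
  rw [← tendsto_congr' hsplit]
  calc Tendsto (fun R => E R ^ 2 - 4 * h * (R ^ (2 * k) / G R)) atTop (𝓝 0)
      ↔ Tendsto (fun R => E R ^ 2) atTop (𝓝 0) :=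
        ⟨fun H => by simpa using H.add (hB.const_mul (4 * h)),
          fun H => by simpa using H.sub (hB.const_mul (4 * h))⟩
    _ ↔ Tendsto E atTop (𝓝 0) := tendsto_sq_nhds_zero_iff
    _ ↔ Tendsto (fun R => q * (R ^ (3 * k + 2) / G R)) atTop (𝓝 0) :=
        ⟨fun H => by simpa [E] using H.sub (hA.const_mul ℓ),
          fun H => by simpa using (hA.const_mul ℓ).add H⟩
    _ ↔ q = 0 :=
        ⟨eq_zero_of_tendsto_const_mul_nhds_zero (by positivity) hlow, fun hq => by simp [hq]⟩

/-- For a homogeneous polynomial graph with nonvanishing gradient at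
`(cos A, sin A)`, there is an umbilic point at infinity at `A`
(i.e. `(κ₁ − κ₂)²/d² → 0` along the ray of direction `A`) if and only if
`Q(f)(cos A, sin A) = 0`, i.e. iff the tangent direction to the level set of `f`
at infinity is an asymptotic direction. -/
theorem umbilic_at_infinity_iff_Q_vanishes (p : MvPolynomial (Fin 2) ℝ) (n : ℕ)
    (hn : 2 ≤ n) (hp : p.IsHomogeneous n) (A : ℝ)
    (hgrad : (ev (Dx p) (Real.cos A) (Real.sin A),
              ev (Dy p) (Real.cos A) (Real.sin A)) ≠ (0, 0)) :
    Tendsto (fun R : ℝ =>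
        Delta2 p (R * Real.cos A) (R * Real.sin A)
          / (dInf p (R * Real.cos A) (R * Real.sin A)) ^ 2)
      atTop (nhds 0)
    ↔ ev (Qf p) (Real.cos A) (Real.sin A) = 0 := by
  obtain ⟨k, rfl⟩ : ∃ k, n = k + 2 := ⟨n - 2, by omega⟩
  set c := Real.cos A
  set s := Real.sin A
  set m := ev (gradNormSq p) c s
  have hm : 0 < m := ev_gradNormSq_pos hgrad
  have hG : ∀ R : ℝ, 1 + ev (gradNormSq p) (R * c) (R * s) = 1 + m * R ^ (2 * k + 2) := fun R => by
    rw [(isHomogeneous_gradNormSq hp).ev_mul_mul, mul_comm]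
  have hΔ : ∀ R : ℝ, Delta2 p (R * c) (R * s) =
      ((ev (laplacian p) c s * R ^ k + ev (Qf p) c s * R ^ (3 * k + 2)) ^ 2
        - 4 * (1 + m * R ^ (2 * k + 2)) * (ev (hessianDet p) c s * R ^ (2 * k)))
        / (1 + m * R ^ (2 * k + 2)) ^ 3 := fun R => by
    rw [Delta2_eq, hG, (isHomogeneous_laplacian hp).ev_mul_mul, (isHomogeneous_Qf hp).ev_mul_mul,
      (isHomogeneous_hessianDet hp).ev_mul_mul]
    ring
  have hW : Tendsto (fun R => Wgr p (R * c) (R * s)) atTop atTop := by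
    simp only [Wgr_eq, hG]
    exact Real.tendsto_sqrt_atTop.comp (tendsto_atTop_add_const_left _ 1
      ((tendsto_pow_atTop (by omega)).const_mul_atTop hm))
  have hWd : Tendsto (fun R => (Wgr p (R * c) (R * s) * dInf p (R * c) (R * s)) ^ 2) atTop
      (𝓝 1) := by
    simpa [dInf] using (tendsto_mul_one_sub_sqrt_div_atTop.comp hW).pow 2
  rw [← tendsto_rayProfile_iff hm (ev (laplacian p) c s) _ (ev (hessianDet p) c s) k]
  refine (tendsto_congr fun R => ?_).trans (tendsto_div_nhds_zero_iff_of_tendsto hWd one_ne_zero)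
  rw [hΔ, mul_pow, Wgr_eq, Real.sq_sqrt (by linarith [ev_gradNormSq_nonneg p (R * c) (R * s)]), hG,
    div_div, div_div]
  ring
end

section
/- Let f be a real polynomial in two variables, homogeneous of degree n ≥ 2, and let v = (cos θ, sin θ) be a point of the unit circle. Then Q(f)(v) = 0 if and only if f(v) = 0 or the determinant of the Hessian of f vanishes at v, i.e. (f_xx·f_yy − f_xy²)(v) = 0. Hence the umbilic points at infinity of the graph of f occur exactly where either f or the Hessian determinant of f vanishes on the circle at infinity. -/
open MvPolynomial Real Filter

theorem MvPolynomial.pderiv_pderiv_comm {R σ : Type*} [CommRing R] (i j : σ)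
    (p : MvPolynomial σ R) : pderiv i (pderiv j p) = pderiv j (pderiv i p) := by
  have hbracket : ⁅pderiv (R := R) i, pderiv j⁆ = (0 : Derivation R _ (MvPolynomial σ R)) := by
    refine derivation_ext fun k => ?_
    classical
    rw [Derivation.commutator_apply, pderiv_X, pderiv_X]
    simp only [Pi.single_apply]
    split_ifs <;> simp
  rw [← sub_eq_zero, ← Derivation.commutator_apply, hbracket, Derivation.zero_apply]

noncomputable def hessDet (p : MvPolynomial (Fin 2) ℝ) : MvPolynomial (Fin 2) ℝ :=
  Dx (Dx p) * Dy (Dy p) - Dy (Dx p) ^ 2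

theorem MvPolynomial.IsHomogeneous.X_mul_Dx_add_X_mul_Dy {p : MvPolynomial (Fin 2) ℝ} {n : ℕ}
    (hp : p.IsHomogeneous n) : X 0 * Dx p + X 1 * Dy p = (n : MvPolynomial (Fin 2) ℝ) * p := by
  simpa [Dx, Dy, Fin.sum_univ_two, nsmul_eq_mul] using hp.sum_X_mul_pderiv

/- With `v = (X 0, X 1)`, `g` the gradient and `H` the Hessian matrix, Euler's identity for
`f`, `f_x`, `f_y` gives `v ⬝ g = n f` and `H v = (n - 1) g`, while `Q = gᵀ adj(H) g`; hence
`(n - 1) Q = gᵀ adj(H) H v = n f det H`. -/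
theorem MvPolynomial.IsHomogeneous.natCast_sub_one_mul_Qf {p : MvPolynomial (Fin 2) ℝ} {n : ℕ}
    (hp : p.IsHomogeneous n) :
    ((n - 1 : ℕ) : MvPolynomial (Fin 2) ℝ) * Qf p = n * p * hessDet p := by
  have hf := hp.X_mul_Dx_add_X_mul_Dy
  have hfx : X 0 * Dx (Dx p) + X 1 * Dy (Dx p) = ((n - 1 : ℕ) : MvPolynomial (Fin 2) ℝ) * Dx p :=
    hp.pderiv.X_mul_Dx_add_X_mul_Dy
  have hfy : X 0 * Dx (Dy p) + X 1 * Dy (Dy p) = ((n - 1 : ℕ) : MvPolynomial (Fin 2) ℝ) * Dy p :=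
    hp.pderiv.X_mul_Dx_add_X_mul_Dy
  rw [show Dx (Dy p) = Dy (Dx p) from pderiv_pderiv_comm 0 1 p] at hfy
  rw [Qf, hessDet]
  linear_combination (Dy (Dx p) * Dx p - Dx (Dx p) * Dy p) * hfy
    + (Dy (Dx p) * Dy p - Dy (Dy p) * Dx p) * hfx
    + (Dx (Dx p) * Dy (Dy p) - Dy (Dx p) ^ 2) * hf

theorem ev_Qf_eq_zero_iff {p : MvPolynomial (Fin 2) ℝ} {n : ℕ} (hn : 2 ≤ n)
    (hp : p.IsHomogeneous n) (x y : ℝ) :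
    ev (Qf p) x y = 0 ↔ ev p x y = 0 ∨ ev (hessDet p) x y = 0 := by
  have key := congrArg (eval ![x, y]) hp.natCast_sub_one_mul_Qf
  simp only [map_mul, map_natCast] at key
  have hn1 : ((n - 1 : ℕ) : ℝ) ≠ 0 := Nat.cast_ne_zero.mpr (by omega)
  have hn0 : (n : ℝ) ≠ 0 := Nat.cast_ne_zero.mpr (by omega)
  rw [ev, ev, ev, ← mul_right_inj' hn1, key, mul_zero, mul_assoc, mul_eq_zero, mul_eq_zero,
    or_iff_right hn0]

/-- For a homogeneous polynomial `f` of degree `n ≥ 2` and a point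
`v = (cos θ, sin θ)` of the unit circle, `Q(f)(v) = 0` iff `f(v) = 0` or the
Hessian determinant of `f` vanishes at `v`: the umbilic points at infinity occur
exactly where `f` or `|Hess f|` vanishes on the circle at infinity. -/
theorem Q_vanishes_iff_f_or_hessian_vanishes (p : MvPolynomial (Fin 2) ℝ) (n : ℕ)
    (hn : 2 ≤ n) (hp : p.IsHomogeneous n) (θ : ℝ) :
    ev (Qf p) (Real.cos θ) (Real.sin θ) = 0 ↔
      ev p (Real.cos θ) (Real.sin θ) = 0 ∨
      ev (Dx (Dx p)) (Real.cos θ) (Real.sin θ) * ev (Dy (Dy p)) (Real.cos θ) (Real.sin θ)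
        - ev (Dy (Dx p)) (Real.cos θ) (Real.sin θ) ^ 2 = 0 := by
  rw [ev_Qf_eq_zero_iff hn hp]
  simp only [ev, hessDet, map_sub, map_mul, map_pow]
end
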